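/- arXiv:2507.02131 — 2 statements merged into one kernel-verified Lean document; each statement's English description precedes it below -/
import Mathlib

section
/- A size function 𝒱 is a small-disturbance ISS-Lyapunov function for χ(k+1) = f(χ(k), w(k)) (implication form: there exist α₁ ∈ K and α₂ ∈ K∞ with 𝒱(f(ξ,μ)) − 𝒱(ξ) ≤ −α₂(𝒱(ξ)) whenever ‖μ‖ ≤ α₁(𝒱(ξ))) if and only if there exist a class-K∞ function α₂, some d > 0 (possibly ∞), and a class-K function α₃ on [0,d) such that 𝒱(f(ξ,μ)) − 𝒱(ξ) ≤ −α₂(𝒱(ξ)) + α₃(‖μ‖) for all μ with ‖μ‖ < d. -/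
/-!
Dissipation ⇒ implication: invert `α₃` on `[0, d/2]` to get `α₁ ∈ K` with `α₃ ∘ α₁ ≤ α₂ / 2`,
so that for `‖μ‖ ≤ α₁ (V ξ)` the disturbance term is absorbed by half of the decay.

Implication ⇒ dissipation: take `d = α₁ 1`. If `α₁ (V ξ) < ‖μ‖ < d` then `V ξ ≤ 1`, so `(ξ, μ)`
ranges over the compact set `{V ≤ 1} × closedBall 0 d`, on which the continuous function
`V (f ξ μ) - V ξ + α₂ (V ξ)` is `≤ 0` wherever `ρ = ‖μ‖ - α₁ (V ξ) ≤ 0`. Compactness makes its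
supremum over `{ρ ≤ r}` tend to `0` as `r → 0`, and averaging this monotone function yields a
class-`K` bound in terms of `ρ ≤ ‖μ‖`.
-/

/-- A class-`K` function: continuous, strictly increasing on `[0,∞)`, and zero at zero. -/
def IsClassK (α : ℝ → ℝ) : Prop :=
  ContinuousOn α (Set.Ici 0) ∧ StrictMonoOn α (Set.Ici 0) ∧ α 0 = 0

/-- A class-`K∞` function: class-`K` and unbounded. -/
def IsClassKInf (α : ℝ → ℝ) : Prop :=
  IsClassK α ∧ Filter.Tendsto α Filter.atTop Filter.atTop

/-- A class-`K` function on `[0, d)`. -/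
def IsClassKOn (d : ℝ) (γ : ℝ → ℝ) : Prop :=
  ContinuousOn γ (Set.Ico 0 d) ∧ StrictMonoOn γ (Set.Ico 0 d) ∧ γ 0 = 0

/-- A (discrete-time) class-`KL` function `β : ℝ≥0 × ℕ → ℝ≥0`. -/
def IsClassKL (β : ℝ → ℕ → ℝ) : Prop :=
  (∀ k : ℕ, IsClassK (fun r => β r k)) ∧
  ∀ r : ℝ, 0 ≤ r → Antitone (β r) ∧ Filter.Tendsto (β r) Filter.atTop (nhds 0)

/-- A size function for `(S, χ*)`: continuous, positive definite w.r.t. `χ*`, and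
coercive (it blows up along sequences approaching the boundary of `S` or with norms
tending to infinity). -/
def IsSizeFunction {n : ℕ} (S : Set (EuclideanSpace ℝ (Fin n)))
    (χs : EuclideanSpace ℝ (Fin n)) (V : EuclideanSpace ℝ (Fin n) → ℝ) : Prop :=
  ContinuousOn V S ∧ V χs = 0 ∧ (∀ χ ∈ S, χ ≠ χs → 0 < V χ) ∧
  ∀ x : ℕ → EuclideanSpace ℝ (Fin n), (∀ k, x k ∈ S) →
    ((Sᶜ.Nonempty ∧ Filter.Tendsto (fun k => Metric.infDist (x k) Sᶜ)
        Filter.atTop (nhds 0)) ∨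
      Filter.Tendsto (fun k => ‖x k‖) Filter.atTop Filter.atTop) →
    Filter.Tendsto (fun k => V (x k)) Filter.atTop Filter.atTop

open Filter Set Topology

lemma IsClassK.monotoneOn {α : ℝ → ℝ} (h : IsClassK α) : MonotoneOn α (Ici 0) :=
  h.2.1.monotoneOn

lemma IsClassK.nonneg {α : ℝ → ℝ} (h : IsClassK α) {s : ℝ} (hs : 0 ≤ s) : 0 ≤ α s :=
  h.2.2 ▸ h.monotoneOn self_mem_Ici hs hs

lemma IsClassK.pos {α : ℝ → ℝ} (h : IsClassK α) {s : ℝ} (hs : 0 < s) : 0 < α s :=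
  h.2.2 ▸ h.2.1 self_mem_Ici hs.le hs

lemma IsClassK.isClassKOn {α : ℝ → ℝ} (h : IsClassK α) (d : ℝ) : IsClassKOn d α :=
  ⟨h.1.mono Ico_subset_Ici_self, h.2.1.mono Ico_subset_Ici_self, h.2.2⟩

lemma IsClassK.half {α : ℝ → ℝ} (h : IsClassK α) : IsClassK fun s => α s / 2 :=
  ⟨h.1.div_const 2, fun _ ha _ hb hab => by linarith [h.2.1 ha hb hab], by simp [h.2.2]⟩

lemma IsClassKInf.half {α : ℝ → ℝ} (h : IsClassKInf α) : IsClassKInf fun s => α s / 2 :=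
  ⟨h.1.half, h.2.atTop_div_const two_pos⟩

/-- The extension keeps `γ` on `[0, c]` and continues it with slope one on both sides. -/
lemma IsClassKOn.exists_orderIso_eqOn {d c : ℝ} {γ : ℝ → ℝ} (hγ : IsClassKOn d γ)
    (hc : 0 ≤ c) (hcd : c < d) : ∃ e : ℝ ≃o ℝ, EqOn e γ (Icc 0 c) := by
  set p : ℝ → ℝ := fun t => projIcc 0 c hc t
  have hp : ∀ t, p t ∈ Ico 0 d := fun t =>
    ⟨(projIcc 0 c hc t).2.1, (projIcc 0 c hc t).2.2.trans_lt hcd⟩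
  have hpmono : Monotone p := fun _ _ h => monotone_projIcc hc h
  have hplip : ∀ a b, a ≤ b → p b - p a ≤ b - a := fun a b hab => by
    have := abs_projIcc_sub_projIcc (h := hc) (c := b) (d := a)
    rw [abs_of_nonneg (sub_nonneg.2 hab)] at this
    exact (le_abs_self _).trans this
  set A : ℝ → ℝ := fun t => γ (p t) + (t - p t)
  have hA : StrictMono A := by
    intro a b hab
    rcases (hpmono hab.le).lt_or_eq with hlt | heq
    · linarith [hγ.2.1 (hp a) (hp b) hlt, hplip a b hab.le]
    · simp only [A, heq]; linarith
  have hAcont : Continuous A :=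
    ((hγ.1.mono fun _ h => ⟨h.1, h.2.trans_lt hcd⟩).comp_continuous
      (continuous_subtype_val.comp continuous_projIcc) fun t => (projIcc 0 c hc t).2).add
      (continuous_id.sub (continuous_subtype_val.comp continuous_projIcc))
  have hbounds : ∀ t, t - c ≤ A t ∧ A t ≤ t + γ c := by
    intro t
    have h0 : γ 0 ≤ γ (p t) := hγ.2.1.monotoneOn ⟨le_rfl, hc.trans_lt hcd⟩ (hp t) (hp t).1
    have hc' : γ (p t) ≤ γ c :=
      hγ.2.1.monotoneOn (hp t) ⟨hc, hcd⟩ (projIcc 0 c hc t).2.2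
    have hpt := (projIcc 0 c hc t).2
    simp only [A]
    constructor <;> linarith [hγ.2.2, hpt.1, hpt.2]
  have hAsurj : Function.Surjective A := hAcont.surjective
    (tendsto_atTop_mono (fun t => (hbounds t).1) (tendsto_atTop_add_const_right _ _ tendsto_id))
    (tendsto_atBot_mono (fun t => (hbounds t).2) (tendsto_atBot_add_const_right _ _ tendsto_id))
  refine ⟨StrictMono.orderIsoOfSurjective A hA hAsurj, fun t ht => ?_⟩
  simp [A, p, projIcc_of_mem hc ht]

lemma IsClassKOn.exists_classK_comp_le {d : ℝ} {γ β : ℝ → ℝ} (hγ : IsClassKOn d γ)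
    (hd : 0 < d) (hβ : IsClassK β) :
    ∃ α, IsClassK α ∧ ∀ s, 0 ≤ s → α s < d ∧ γ (α s) ≤ β s := by
  obtain ⟨e, he⟩ := hγ.exists_orderIso_eqOn (half_pos hd).le (half_lt_self hd)
  set L := γ (d / 2)
  have hL : 0 < L := hγ.2.2 ▸ hγ.2.1 ⟨le_rfl, hd⟩ ⟨(half_pos hd).le, half_lt_self hd⟩ (half_pos hd)
  have he0 : e 0 = 0 := (he ⟨le_rfl, (half_pos hd).le⟩).trans hγ.2.2
  have heL : e (d / 2) = L := he ⟨(half_pos hd).le, le_rfl⟩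
  -- `θ` saturates below `L = γ (d / 2)`, which keeps `α` inside `[0, d / 2)`.
  set θ : ℝ → ℝ := fun y => L * y / (L + y)
  have hθ : ∀ y, 0 ≤ y → 0 ≤ θ y ∧ θ y ≤ y ∧ θ y < L := by
    intro y hy
    have hden : 0 < L + y := by linarith
    refine ⟨by positivity, ?_, ?_⟩
    · rw [div_le_iff₀ hden]; nlinarith
    · rw [div_lt_iff₀ hden]; nlinarith
  have hθmono : StrictMonoOn θ (Ici 0) := by
    intro y hy z hz hyz
    have hy' : (0:ℝ) ≤ y := hy
    have hz' : (0:ℝ) ≤ z := hz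
    rw [div_lt_div_iff₀ (by linarith) (by linarith)]
    nlinarith [mul_lt_mul_of_pos_left hyz (mul_pos hL hL)]
  refine ⟨fun s => e.symm (θ (β s)), ⟨?_, ?_, ?_⟩, fun s hs => ?_⟩
  · refine e.symm.continuous.comp_continuousOn ?_
    exact (continuousOn_const.mul hβ.1).div (continuousOn_const.add hβ.1)
      fun s hs => (add_pos_of_pos_of_nonneg hL (hβ.nonneg hs)).ne'
  · exact e.symm.strictMono.comp_strictMonoOn
      (hθmono.comp hβ.2.1 fun s hs => hβ.nonneg (mem_Ici.1 hs))
  · show e.symm (θ (β 0)) = 0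
    rw [hβ.2.2, e.symm_apply_eq, he0]
    simp [θ]
  · obtain ⟨h0, hle, hlt⟩ := hθ _ (hβ.nonneg hs)
    have hα0 : 0 ≤ e.symm (θ (β s)) := e.le_symm_apply.2 (by rwa [he0])
    have hαc : e.symm (θ (β s)) < d / 2 := e.symm_apply_lt.2 (by rwa [heL])
    refine ⟨hαc.trans (half_lt_self hd), ?_⟩
    rw [← he ⟨hα0, hαc.le⟩, e.apply_symm_apply]
    exact hle

-- `r` plus the mean of `G` over `[r, 2r]`: continuous even where `G` jumps.
noncomputable def averagedMajorant (G : ℝ → ℝ) (r : ℝ) : ℝ := r + ∫ t in (1:ℝ)..2, G (r * t)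

lemma averagedMajorant_eq {G : ℝ → ℝ} {r : ℝ} (hr : 0 < r) :
    averagedMajorant G r = r + r⁻¹ * ∫ u in r..2 * r, G u := by
  rw [averagedMajorant, intervalIntegral.integral_comp_mul_left _ hr.ne', mul_one, mul_comm r 2,
    smul_eq_mul]

namespace Monotone

variable {G : ℝ → ℝ} (hG : Monotone G)
include hG

lemma intervalIntegrable_comp_mul {r : ℝ} (hr : 0 ≤ r) :
    IntervalIntegrable (fun t => G (r * t)) MeasureTheory.volume 1 2 :=
  MonotoneOn.intervalIntegrable fun _ _ _ _ hxy => hG (mul_le_mul_of_nonneg_left hxy hr)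

lemma le_averagedMajorant {r : ℝ} (hr : 0 ≤ r) : r + G r ≤ averagedMajorant G r := by
  have h := intervalIntegral.integral_mono_on one_le_two intervalIntegrable_const
    (hG.intervalIntegrable_comp_mul hr) fun t ht => hG (le_mul_of_one_le_right hr ht.1)
  simp only [intervalIntegral.integral_const, smul_eq_mul] at h
  unfold averagedMajorant
  linarith

lemma averagedMajorant_le {r : ℝ} (hr : 0 ≤ r) : averagedMajorant G r ≤ r + G (2 * r) := by
  have h := intervalIntegral.integral_mono_on one_le_two (hG.intervalIntegrable_comp_mul hr)
    intervalIntegrable_const fun t ht => hG (by nlinarith [ht.2] : r * t ≤ 2 * r)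
  simp only [intervalIntegral.integral_const, smul_eq_mul] at h
  unfold averagedMajorant
  linarith

lemma strictMonoOn_averagedMajorant : StrictMonoOn (averagedMajorant G) (Ici 0) := by
  intro a ha b _ hab
  have h := intervalIntegral.integral_mono_on one_le_two (hG.intervalIntegrable_comp_mul ha)
    (hG.intervalIntegrable_comp_mul (ha.out.trans hab.le))
    fun t ht => hG (mul_le_mul_of_nonneg_right hab.le (zero_le_one.trans ht.1))
  unfold averagedMajorant
  linarith

lemma continuousOn_averagedMajorant (hG0 : G 0 = 0) (hGc : ContinuousWithinAt G (Ici 0) 0) :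
    ContinuousOn (averagedMajorant G) (Ici 0) := by
  intro r hr
  rcases (mem_Ici.1 hr).eq_or_lt with rfl | hr
  · have hid : Tendsto (fun r : ℝ => r) (𝓝[≥] 0) (𝓝 0) :=
      tendsto_id.mono_left nhdsWithin_le_nhds
    have hGc' : Tendsto G (𝓝[≥] 0) (𝓝 0) := by simpa [hG0] using hGc.tendsto
    have h2r : Tendsto (fun r : ℝ => 2 * r) (𝓝[≥] 0) (𝓝[≥] 0) :=
      tendsto_nhdsWithin_of_tendsto_nhds_of_eventually_within _
        (by simpa using hid.const_mul 2)
        (eventually_nhdsWithin_of_forall fun _ hx => mem_Ici.2 (mul_nonneg zero_le_two hx))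
    have h1 : Tendsto (fun r => r + G r) (𝓝[≥] 0) (𝓝 0) := by simpa using hid.add hGc'
    have h2 : Tendsto (fun r => r + G (2 * r)) (𝓝[≥] 0) (𝓝 0) := by
      simpa using hid.add (hGc'.comp h2r)
    have hmaj0 : averagedMajorant G 0 = 0 := by simp [averagedMajorant, hG0]
    rw [ContinuousWithinAt, hmaj0]
    exact tendsto_of_tendsto_of_tendsto_of_le_of_le' h1 h2
      (eventually_nhdsWithin_of_forall fun _ hx => hG.le_averagedMajorant hx)
      (eventually_nhdsWithin_of_forall fun _ hx => hG.averagedMajorant_le hx)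
  · have hprim := intervalIntegral.continuous_primitive
      (fun a b => (hG.monotoneOn _).intervalIntegrable (μ := MeasureTheory.volume)) 0
    have hcont :
        ContinuousAt (fun r => r + r⁻¹ * ((∫ u in 0..2 * r, G u) - ∫ u in 0..r, G u)) r :=
      continuousAt_id.add ((continuousAt_inv₀ hr.ne').mul
        ((hprim.comp (continuous_const_mul 2)).continuousAt.sub hprim.continuousAt))
    refine (hcont.congr ?_).continuousWithinAt
    filter_upwards [eventually_gt_nhds hr] with x hx
    rw [averagedMajorant_eq hx, intervalIntegral.integral_interval_sub_left]
    all_goals exact (hG.monotoneOn _).intervalIntegrable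

lemma exists_classK_ge (hG0 : G 0 = 0) (hGc : ContinuousWithinAt G (Ici 0) 0) :
    ∃ α, IsClassK α ∧ ∀ r, 0 ≤ r → G r ≤ α r :=
  ⟨averagedMajorant G, ⟨hG.continuousOn_averagedMajorant hG0 hGc,
    hG.strictMonoOn_averagedMajorant, by simp [averagedMajorant, hG0]⟩,
    fun r hr => by linarith [hG.le_averagedMajorant hr]⟩

end Monotone

namespace IsCompact

variable {X : Type*} [TopologicalSpace X] {K : Set X} {ρ W : X → ℝ}

/-- On `K ∩ {W ≥ ε}`, `ρ` attains a minimum, which is positive. -/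
lemma exists_pos_forall_lt (hK : IsCompact K) (hρ : ContinuousOn ρ K) (hW : ContinuousOn W K)
    (h0 : ∀ p ∈ K, ρ p ≤ 0 → W p ≤ 0) {ε : ℝ} (hε : 0 < ε) :
    ∃ δ > 0, ∀ p ∈ K, ρ p < δ → W p < ε := by
  set C := K ∩ W ⁻¹' Ici ε
  have hC : IsCompact C := hW.upperSemicontinuousOn.isCompact_inter_preimage_Ici hK ε
  rcases C.eq_empty_or_nonempty with hCe | hCne
  · refine ⟨1, one_pos, fun p hp _ => not_le.1 fun hWp => ?_⟩
    exact (Set.eq_empty_iff_forall_notMem.1 hCe) p ⟨hp, hWp⟩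
  obtain ⟨p₀, ⟨hp₀K, hp₀ε⟩, hmin⟩ := hC.exists_isMinOn hCne (hρ.mono inter_subset_left)
  refine ⟨ρ p₀, not_le.1 fun hp₀ => ?_, fun p hp hρp => not_le.1 fun hWp => ?_⟩
  · linarith [h0 p₀ hp₀K hp₀, show ε ≤ W p₀ from hp₀ε]
  · exact (hmin ⟨hp, hWp⟩).not_gt hρp

/-- `α` majorizes the monotone function `r ↦ sup {0, W p | p ∈ K, ρ p ≤ r}`, which is
continuous at `0` by `exists_pos_forall_lt`. -/
lemma exists_classK_bound (hK : IsCompact K) (hρ : ContinuousOn ρ K) (hW : ContinuousOn W K)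
    (h0 : ∀ p ∈ K, ρ p ≤ 0 → W p ≤ 0) :
    ∃ α, IsClassK α ∧ ∀ p ∈ K, 0 ≤ ρ p → W p ≤ α (ρ p) := by
  set G : ℝ → ℝ := fun r => sSup (insert 0 (W '' {p ∈ K | ρ p ≤ r}))
  have hbdd : ∀ r, BddAbove (insert 0 (W '' {p ∈ K | ρ p ≤ r})) := fun r =>
    ((hK.bddAbove_image hW).mono (image_mono (sep_subset K _))).insert 0
  have hle : ∀ r, ∀ p ∈ K, ρ p ≤ r → W p ≤ G r := fun r p hp hpr =>
    le_csSup (hbdd r) (mem_insert_of_mem _ ⟨p, ⟨hp, hpr⟩, rfl⟩)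
  have hGle : ∀ r b, 0 ≤ b → (∀ p ∈ K, ρ p ≤ r → W p ≤ b) → G r ≤ b := by
    intro r b hb h
    refine csSup_le (insert_nonempty _ _) ?_
    rintro _ (rfl | ⟨p, ⟨hp, hpr⟩, rfl⟩)
    exacts [hb, h p hp hpr]
  have hG0 : G 0 = 0 := le_antisymm (hGle 0 0 le_rfl h0) (le_csSup (hbdd 0) (mem_insert _ _))
  have hGmono : Monotone G := fun a b hab =>
    csSup_le_csSup (hbdd b) (insert_nonempty _ _)
      (insert_subset_insert (image_mono fun p hp => ⟨hp.1, hp.2.trans hab⟩))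
  have hGc : ContinuousWithinAt G (Ici 0) 0 := by
    rw [ContinuousWithinAt, hG0, tendsto_order]
    refine ⟨fun a ha => eventually_nhdsWithin_of_forall fun r hr =>
      ha.trans_le (hG0 ▸ hGmono (mem_Ici.1 hr)), fun b hb => ?_⟩
    obtain ⟨δ, hδ, hδW⟩ := hK.exists_pos_forall_lt hρ hW h0 (half_pos hb)
    filter_upwards [Ico_mem_nhdsGE hδ] with r hr
    refine (hGle r (b / 2) (half_pos hb).le fun p hp hpr => ?_).trans_lt (half_lt_self hb)
    exact (hδW p hp (hpr.trans_lt hr.2)).le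
  obtain ⟨α, hα, hGα⟩ := hGmono.exists_classK_ge hG0 hGc
  exact ⟨α, hα, fun p hp hρp => (hle _ p hp le_rfl).trans (hGα _ hρp)⟩

end IsCompact

section SizeFunction

variable {n : ℕ} {S : Set (EuclideanSpace ℝ (Fin n))} {χs : EuclideanSpace ℝ (Fin n)}
  {V : EuclideanSpace ℝ (Fin n) → ℝ}

lemma IsSizeFunction.nonneg (hV : IsSizeFunction S χs V) {ξ : EuclideanSpace ℝ (Fin n)}
    (hξ : ξ ∈ S) : 0 ≤ V ξ := by
  by_cases h : ξ = χs
  · exact (congrArg V h).trans hV.2.1 |>.ge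
  · exact (hV.2.2.1 ξ hξ h).le

/-- A sequence in a sublevel set can neither approach `∂S` nor escape to infinity, by
coercivity; so the sublevel set is closed and bounded. -/
lemma IsSizeFunction.isCompact_sublevel (hS : IsOpen S) (hV : IsSizeFunction S χs V) (c : ℝ) :
    IsCompact {ξ ∈ S | V ξ ≤ c} := by
  have hbdd : ∀ x : ℕ → EuclideanSpace ℝ (Fin n), (∀ k, x k ∈ S ∧ V (x k) ≤ c) →
      ¬Tendsto (fun k => V (x k)) atTop atTop := fun x hx h => by
    obtain ⟨k, hk⟩ := (h.eventually_gt_atTop c).exists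
    exact (hx k).2.not_gt hk
  refine Metric.isCompact_of_isClosed_isBounded (IsSeqClosed.isClosed ?_) ?_
  · intro x a hx hxa
    by_cases haS : a ∈ S
    · exact ⟨haS, le_of_tendsto ((hV.1.continuousAt (hS.mem_nhds haS)).tendsto.comp hxa)
        (Eventually.of_forall fun k => (hx k).2)⟩
    refine (hbdd x hx (hV.2.2.2 x (fun k => (hx k).1) (Or.inl ⟨⟨a, haS⟩, ?_⟩))).elim
    exact squeeze_zero (fun _ => Metric.infDist_nonneg)
      (fun k => Metric.infDist_le_dist_of_mem haS) (tendsto_iff_dist_tendsto_zero.1 hxa)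
  · rw [isBounded_iff_forall_norm_le]
    by_contra! hunb
    choose x hx hnx using fun k : ℕ => hunb k
    exact hbdd x hx (hV.2.2.2 x (fun k => (hx k).1)
      (Or.inr (tendsto_atTop_mono (fun k => (hnx k).le) tendsto_natCast_atTop_atTop)))

end SizeFunction

section Dissipation

variable {X Y : Type*} [SeminormedAddCommGroup Y] {S : Set X} {f : X → Y → X} {V : X → ℝ}

lemma exists_dissipation_of_implication [TopologicalSpace X] [ProperSpace Y]
    (hK : ∀ c, IsCompact {ξ ∈ S | V ξ ≤ c}) (hVc : ContinuousOn V S)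
    (hV0 : ∀ ξ ∈ S, 0 ≤ V ξ) (hf : Continuous fun p : X × Y => f p.1 p.2)
    (hfS : ∀ ξ ∈ S, ∀ μ, f ξ μ ∈ S) {α₁ α₂ : ℝ → ℝ} (h1 : IsClassK α₁)
    (h2 : ContinuousOn α₂ (Ici 0))
    (H : ∀ ξ ∈ S, ∀ μ, ‖μ‖ ≤ α₁ (V ξ) → V (f ξ μ) - V ξ ≤ -α₂ (V ξ)) :
    ∃ (d : ℝ) (α₃ : ℝ → ℝ), 0 < d ∧ IsClassKOn d α₃ ∧
      ∀ ξ ∈ S, ∀ μ, ‖μ‖ < d → V (f ξ μ) - V ξ ≤ -α₂ (V ξ) + α₃ ‖μ‖ := by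
  set d := α₁ 1
  set K : Set (X × Y) := {ξ ∈ S | V ξ ≤ 1} ×ˢ Metric.closedBall 0 d
  have hVfst : ContinuousOn (fun p : X × Y => V p.1) K :=
    hVc.comp continuous_fst.continuousOn fun p hp => hp.1.1
  have hρ : ContinuousOn (fun p : X × Y => ‖p.2‖ - α₁ (V p.1)) K :=
    continuous_snd.norm.continuousOn.sub (h1.1.comp hVfst fun p hp => hV0 _ hp.1.1)
  have hW : ContinuousOn (fun p : X × Y => V (f p.1 p.2) - V p.1 + α₂ (V p.1)) K :=
    ((hVc.comp hf.continuousOn fun p hp => hfS _ hp.1.1 _).sub hVfst).add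
      (h2.comp hVfst fun p hp => hV0 _ hp.1.1)
  obtain ⟨α₃, h3, hWα₃⟩ := ((hK 1).prod (isCompact_closedBall 0 d)).exists_classK_bound hρ hW
    fun p hp hρp => by linarith [H p.1 hp.1.1 p.2 (sub_nonpos.1 hρp)]
  refine ⟨d, α₃, h1.pos one_pos, h3.isClassKOn d, fun ξ hξ μ hμ => ?_⟩
  rcases le_or_gt ‖μ‖ (α₁ (V ξ)) with hsmall | hlarge
  · linarith [H ξ hξ μ hsmall, h3.nonneg (norm_nonneg μ)]
  have hV1 : V ξ ≤ 1 := (h1.2.1.le_iff_le (hV0 ξ hξ) (mem_Ici.2 zero_le_one)).1 (by linarith)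
  have hbound := hWα₃ (ξ, μ) ⟨⟨hξ, hV1⟩, mem_closedBall_zero_iff.2 hμ.le⟩ (sub_nonneg.2 hlarge.le)
  have hmono : α₃ (‖μ‖ - α₁ (V ξ)) ≤ α₃ ‖μ‖ := h3.monotoneOn (sub_nonneg.2 hlarge.le)
    (norm_nonneg μ) (sub_le_self _ (h1.nonneg (hV0 ξ hξ)))
  dsimp only at hbound
  linarith

lemma exists_implication_of_dissipation (hV0 : ∀ ξ ∈ S, 0 ≤ V ξ) {α₂ α₃ : ℝ → ℝ} {d : ℝ}
    (h2 : IsClassK α₂) (hd : 0 < d) (h3 : IsClassKOn d α₃)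
    (H : ∀ ξ ∈ S, ∀ μ, ‖μ‖ < d → V (f ξ μ) - V ξ ≤ -α₂ (V ξ) + α₃ ‖μ‖) :
    ∃ α₁, IsClassK α₁ ∧ ∀ ξ ∈ S, ∀ μ, ‖μ‖ ≤ α₁ (V ξ) → V (f ξ μ) - V ξ ≤ -(α₂ (V ξ) / 2) := by
  obtain ⟨α₁, h1, hα₁⟩ := h3.exists_classK_comp_le hd h2.half
  refine ⟨α₁, h1, fun ξ hξ μ hμ => ?_⟩
  obtain ⟨hlt, hle⟩ := hα₁ (V ξ) (hV0 ξ hξ)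
  have hμd : ‖μ‖ < d := hμ.trans_lt hlt
  have hmono : α₃ ‖μ‖ ≤ α₃ (α₁ (V ξ)) :=
    h3.2.1.monotoneOn ⟨norm_nonneg μ, hμd⟩ ⟨h1.nonneg (hV0 ξ hξ), hlt⟩ hμ
  linarith [H ξ hξ μ hμd]

end Dissipation

theorem small_disturbance_Lyapunov_dissipation_iff_general {n m : ℕ}
    (S : Set (EuclideanSpace ℝ (Fin n))) (hSopen : IsOpen S)
    (f : EuclideanSpace ℝ (Fin n) → EuclideanSpace ℝ (Fin m) → EuclideanSpace ℝ (Fin n))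
    (hfcont : Continuous fun p : EuclideanSpace ℝ (Fin n) × EuclideanSpace ℝ (Fin m) =>
      f p.1 p.2)
    (hfS : ∀ ξ ∈ S, ∀ μ : EuclideanSpace ℝ (Fin m), f ξ μ ∈ S)
    (χs : EuclideanSpace ℝ (Fin n))
    (V : EuclideanSpace ℝ (Fin n) → ℝ) (hV : IsSizeFunction S χs V) :
    (∃ α₁ α₂ : ℝ → ℝ, IsClassK α₁ ∧ IsClassKInf α₂ ∧
      ∀ ξ ∈ S, ∀ μ : EuclideanSpace ℝ (Fin m),
        ‖μ‖ ≤ α₁ (V ξ) → V (f ξ μ) - V ξ ≤ -α₂ (V ξ)) ↔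
    (∃ (α₂ : ℝ → ℝ) (d : ℝ) (α₃ : ℝ → ℝ), IsClassKInf α₂ ∧ 0 < d ∧ IsClassKOn d α₃ ∧
      ∀ ξ ∈ S, ∀ μ : EuclideanSpace ℝ (Fin m),
        ‖μ‖ < d → V (f ξ μ) - V ξ ≤ -α₂ (V ξ) + α₃ ‖μ‖) := by
  constructor
  · rintro ⟨α₁, α₂, h1, h2, H⟩
    obtain ⟨d, α₃, hd, h3, H'⟩ := exists_dissipation_of_implication
      (hV.isCompact_sublevel hSopen) hV.1 (fun _ => hV.nonneg) hfcont hfS h1 h2.1.1 H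
    exact ⟨α₂, d, α₃, h2, hd, h3, H'⟩
  · rintro ⟨α₂, d, α₃, h2, hd, h3, H⟩
    obtain ⟨α₁, h1, H'⟩ := exists_implication_of_dissipation (fun _ => hV.nonneg) h2.1 hd h3 H
    exact ⟨α₁, _, h1, h2.half, H'⟩

/-- "Implication form" and "dissipation form" characterizations of a small-disturbance
ISS-Lyapunov function are equivalent: a size function `V` satisfies
`V(f(ξ,μ)) − V(ξ) ≤ −α₂(V(ξ))` whenever `‖μ‖ ≤ α₁(V(ξ))` (for some `α₁ ∈ K`, `α₂ ∈ K∞`)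
iff there exist `α₂ ∈ K∞`, `d > 0`, and `α₃ ∈ K_{[0,d)}` with
`V(f(ξ,μ)) − V(ξ) ≤ −α₂(V(ξ)) + α₃(‖μ‖)` for all `μ` with `‖μ‖ < d`. -/
theorem small_disturbance_Lyapunov_dissipation_iff {n m : ℕ}
    (S : Set (EuclideanSpace ℝ (Fin n))) (hSopen : IsOpen S)
    (f : EuclideanSpace ℝ (Fin n) → EuclideanSpace ℝ (Fin m) → EuclideanSpace ℝ (Fin n))
    (hfcont : Continuous fun p : EuclideanSpace ℝ (Fin n) × EuclideanSpace ℝ (Fin m) =>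
      f p.1 p.2)
    (hfS : ∀ ξ ∈ S, ∀ μ : EuclideanSpace ℝ (Fin m), f ξ μ ∈ S)
    (χs : EuclideanSpace ℝ (Fin n)) (hχs : χs ∈ S) (heq : f χs 0 = χs)
    (V : EuclideanSpace ℝ (Fin n) → ℝ) (hV : IsSizeFunction S χs V) :
    (∃ α₁ α₂ : ℝ → ℝ, IsClassK α₁ ∧ IsClassKInf α₂ ∧
      ∀ ξ ∈ S, ∀ μ : EuclideanSpace ℝ (Fin m),
        ‖μ‖ ≤ α₁ (V ξ) → V (f ξ μ) - V ξ ≤ -α₂ (V ξ)) ↔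
    (∃ (α₂ : ℝ → ℝ) (d : ℝ) (α₃ : ℝ → ℝ), IsClassKInf α₂ ∧ 0 < d ∧ IsClassKOn d α₃ ∧
      ∀ ξ ∈ S, ∀ μ : EuclideanSpace ℝ (Fin m),
        ‖μ‖ < d → V (f ξ μ) - V ξ ≤ -α₂ (V ξ) + α₃ ‖μ‖) :=
  small_disturbance_Lyapunov_dissipation_iff_general S hSopen f hfcont hfS χs V hV
end

section
/- Subtracting the ARE from the Lyapunov equation for a stabilizing K and completing the square yields (A−BK)ᵀ(P_K − P*) + (P_K − P*)(A−BK) + (K−K*)ᵀR(K−K*) = 0; consequently 𝒥₂(K) − 𝒥₂(K*) = Tr(P_K − P*) = ⟨K−K*, R(K−K*)⟩_{Y_K} ≥ 0, so P_K ⪰ P* for every K ∈ 𝒢 and K* is the global minimizer of 𝒥₂ over 𝒢. -/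
/-!
Write `A_K = A - BK` and `Δ = P_K - P*`. Subtracting the Riccati equation from the Lyapunov
equation of `K` and completing the square with `R K* = Bᵀ P*` gives
`A_Kᵀ Δ + Δ A_K = -(K - K*)ᵀ R (K - K*)`; pairing this with `A_K Y_K + Y_K A_Kᵀ = -1` under the
trace gives the cost formula.

For `Δ ⪰ 0`, `W = Y_K⁻¹ ≻ 0` satisfies `A_Kᵀ W + W A_K = -W²`. Along `z(t) = exp (t A_K) x` the
form `zᵀ Δ z` is nonincreasing and `zᵀ W z ≥ 0` has derivative `-|W z|²`. If `xᵀ Δ x < 0`, then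
`zᵀ Δ z` stays below this negative value, which bounds `|W z|²` away from zero, so `zᵀ W z`
would eventually become negative.
-/

open Matrix

/-- A real square matrix is Hurwitz if all of its (complex) eigenvalues have
strictly negative real part. -/
def Hurwitz {n : ℕ} (A : Matrix (Fin n) (Fin n) ℝ) : Prop :=
  ∀ μ ∈ spectrum ℂ (A.map (Complex.ofReal)), μ.re < 0

section Algebra

variable {ι κ α : Type*} [Fintype ι] [Fintype κ] [CommRing α]

theorem lyapunov_sub_riccati [DecidableEq κ] {A Q Ps PK : Matrix ι ι α} {B : Matrix ι κ α}
    {R : Matrix κ κ α} {K : Matrix κ ι α} (hR : IsUnit R.det) (hRsymm : Rᵀ = R) (hPs : Psᵀ = Ps)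
    (hARE : Aᵀ * Ps + Ps * A + Q - Ps * B * R⁻¹ * Bᵀ * Ps = 0)
    (hPK : (A - B * K)ᵀ * PK + PK * (A - B * K) + Q + Kᵀ * R * K = 0) :
    (A - B * K)ᵀ * (PK - Ps) + (PK - Ps) * (A - B * K)
      + (K - R⁻¹ * Bᵀ * Ps)ᵀ * R * (K - R⁻¹ * Bᵀ * Ps) = 0 := by
  set Ks := R⁻¹ * Bᵀ * Ps
  have hRKs : R * Ks = Bᵀ * Ps := by
    simp only [Ks, ← Matrix.mul_assoc, mul_nonsing_inv R hR, Matrix.one_mul]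
  have hKsR : Ksᵀ * R = Ps * B := by
    rw [← hRsymm, ← transpose_mul, hRKs, transpose_mul, hPs, transpose_transpose]
  have hKsRKs : Ps * B * R⁻¹ * Bᵀ * Ps = Ksᵀ * (R * Ks) := by
    rw [hRKs, ← hKsR]; simp only [Matrix.mul_assoc, mul_nonsing_inv_cancel_left _ _ hR]
  calc _ = ((A - B * K)ᵀ * PK + PK * (A - B * K) + Q + Kᵀ * R * K)
          - (Aᵀ * Ps + Ps * A + Q - Ps * B * R⁻¹ * Bᵀ * Ps)
          + (Kᵀ * (Bᵀ * Ps - R * Ks) + (Ps * B - Ksᵀ * R) * K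
             + (Ksᵀ * (R * Ks) - Ps * B * R⁻¹ * Bᵀ * Ps)) := by
        simp only [transpose_sub, transpose_mul, Matrix.sub_mul, Matrix.mul_sub,
          ← Matrix.mul_assoc]
        noncomm_ring
    _ = 0 := by rw [hPK, hARE, hKsRKs, hRKs, hKsR]; simp

theorem trace_eq_of_lyapunov [DecidableEq ι] {A Δ N Y : Matrix ι ι α}
    (hΔ : Aᵀ * Δ + Δ * A + N = 0) (hY : A * Y + Y * Aᵀ + 1 = 0) : Δ.trace = (N * Y).trace := by
  have hN : N = -(Aᵀ * Δ + Δ * A) := eq_neg_of_add_eq_zero_right hΔ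
  have h1 : (1 : Matrix ι ι α) = -(A * Y + Y * Aᵀ) := eq_neg_of_add_eq_zero_right hY
  calc Δ.trace = (Δ * 1).trace := by rw [Matrix.mul_one]
    _ = -((Δ * A * Y).trace + (Δ * Y * Aᵀ).trace) := by
      rw [h1]; simp only [Matrix.mul_neg, Matrix.mul_add, trace_neg, trace_add, Matrix.mul_assoc]
    _ = -((Δ * A * Y).trace + (Aᵀ * Δ * Y).trace) := by
      rw [trace_mul_cycle Δ Y Aᵀ]
    _ = (N * Y).trace := by
      rw [hN, Matrix.neg_mul, trace_neg, Matrix.add_mul, trace_add, add_comm]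

theorem lyapunov_inv [DecidableEq ι] {A Y : Matrix ι ι α} (hY : IsUnit Y.det)
    (hA : A * Y + Y * Aᵀ + 1 = 0) : Aᵀ * Y⁻¹ + Y⁻¹ * A = -(Y⁻¹ * Y⁻¹) := by
  have h := congrArg (fun X => Y⁻¹ * X * Y⁻¹) hA
  simp only [Matrix.mul_add, Matrix.add_mul, Matrix.mul_one, Matrix.mul_zero, Matrix.zero_mul,
    Matrix.mul_assoc, mul_nonsing_inv Y hY, Matrix.mul_one] at h
  simp only [← Matrix.mul_assoc, nonsing_inv_mul Y hY, Matrix.one_mul] at h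
  rw [← sub_eq_zero, sub_neg_eq_add, ← h]; abel

end Algebra

section QuadraticBounds

variable {ι κ : Type*} [Fintype ι] [Fintype κ]

theorem dotProduct_mulVec_self_le (N : Matrix κ ι ℝ) (u : ι → ℝ) :
    (N *ᵥ u) ⬝ᵥ (N *ᵥ u) ≤ (∑ i, ∑ j, N i j ^ 2) * (u ⬝ᵥ u) := by
  simp only [dotProduct, mulVec, ← sq]
  rw [Finset.sum_mul]
  exact Finset.sum_le_sum fun i _ => Finset.sum_mul_sq_le_sq_mul_sq _ (N i) u

theorem exists_neg_dotProduct_mulVec_le (N : Matrix ι ι ℝ) :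
    ∃ c, 0 ≤ c ∧ ∀ z, -(z ⬝ᵥ (N *ᵥ z)) ≤ c * (z ⬝ᵥ z) := by
  refine ⟨(1 + ∑ i, ∑ j, N i j ^ 2) / 2, by positivity, fun z => ?_⟩
  have hsq : 0 ≤ (z + N *ᵥ z) ⬝ᵥ (z + N *ᵥ z) := by
    simpa only [dotProduct, ← sq] using Finset.sum_nonneg fun i _ => sq_nonneg ((z + N *ᵥ z) i)
  have hN := dotProduct_mulVec_self_le N z
  simp only [add_dotProduct, dotProduct_add, dotProduct_comm (N *ᵥ z) z] at hsq
  linarith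

theorem exists_dotProduct_self_le_of_isUnit [DecidableEq ι] {W : Matrix ι ι ℝ} (hW : IsUnit W) :
    ∃ c, 0 ≤ c ∧ ∀ z, z ⬝ᵥ z ≤ c * ((W *ᵥ z) ⬝ᵥ (W *ᵥ z)) := by
  obtain ⟨W, rfl⟩ := hW
  refine ⟨∑ i, ∑ j, (↑W⁻¹ : Matrix ι ι ℝ) i j ^ 2, by positivity, fun z => ?_⟩
  simpa only [mulVec_mulVec, Units.inv_mul, one_mulVec] using
    dotProduct_mulVec_self_le (↑W⁻¹ : Matrix ι ι ℝ) (W *ᵥ z)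

end QuadraticBounds

theorem exists_neg_of_hasDerivAt_le_neg {h h' : ℝ → ℝ} {ε : ℝ} (hε : 0 < ε)
    (hh : ∀ t, HasDerivAt h (h' t) t) (hh' : ∀ t, 0 ≤ t → h' t ≤ -ε) : ∃ t, h t < 0 := by
  set T := (|h 0| + 1) / ε
  have hT : 0 ≤ T := by positivity
  have hmv : h T - h 0 ≤ -ε * (T - 0) := by
    refine (convex_Ici 0).image_sub_le_mul_sub_of_deriv_le
      (fun t _ => (hh t).continuousAt.continuousWithinAt)
      (fun t _ => (hh t).differentiableAt.differentiableWithinAt) (fun t ht => ?_)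
      0 (Set.mem_Ici.2 le_rfl) T hT hT
    rw [interior_Ici] at ht
    exact (hh t).deriv ▸ hh' t (le_of_lt ht)
  have hεT : ε * T = |h 0| + 1 := mul_div_cancel₀ _ hε.ne'
  exact ⟨T, by linarith [le_abs_self (h 0)]⟩

section LyapunovFlow

variable {ι : Type*} [Fintype ι]

attribute [local instance] Matrix.linftyOpNormedRing Matrix.linftyOpNormedAlgebra

open NormedSpace

theorem hasDerivAt_dotProduct_mulVec_exp_smul [DecidableEq ι] (A N : Matrix ι ι ℝ) (x : ι → ℝ)
    (t : ℝ) :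
    HasDerivAt (fun s : ℝ => (exp (s • A) *ᵥ x) ⬝ᵥ (N *ᵥ (exp (s • A) *ᵥ x)))
      ((exp (t • A) *ᵥ x) ⬝ᵥ ((Aᵀ * N + N * A) *ᵥ (exp (t • A) *ᵥ x))) t := by
  let φ : Matrix ι ι ℝ →ₗ[ℝ] ℝ :=
    { toFun := fun G => x ⬝ᵥ (G *ᵥ x)
      map_add' := fun G₁ G₂ => by simp [add_mulVec]
      map_smul' := fun c G => by simp [smul_mulVec] }
  have hφ : ∀ (G : Matrix ι ι ℝ) (s : ℝ),
      φ ((exp (s • A))ᵀ * G * exp (s • A)) =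
        (exp (s • A) *ᵥ x) ⬝ᵥ (G *ᵥ (exp (s • A) *ᵥ x)) := by
    intro G s
    change x ⬝ᵥ (((exp (s • A))ᵀ * G * exp (s • A)) *ᵥ x) = _
    rw [Matrix.mul_assoc, ← mulVec_mulVec, dotProduct_mulVec, vecMul_transpose, ← mulVec_mulVec]
  have hE : ∀ s : ℝ, HasDerivAt (fun u : ℝ => exp (u • A)) (A * exp (s • A)) s :=
    hasDerivAt_exp_smul_const' A
  have hET : HasDerivAt (fun u : ℝ => (exp (u • A))ᵀ) ((exp (t • A))ᵀ * Aᵀ) t := by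
    have hT : ∀ u : ℝ, (exp (u • A))ᵀ = exp (u • Aᵀ) := fun u => by
      rw [← exp_transpose, transpose_smul]
    simp only [hT]
    exact hasDerivAt_exp_smul_const Aᵀ t
  have hG : HasDerivAt (fun s : ℝ => (exp (s • A))ᵀ * N * exp (s • A))
      ((exp (t • A))ᵀ * (Aᵀ * N + N * A) * exp (t • A)) t := by
    rw [show (exp (t • A))ᵀ * (Aᵀ * N + N * A) * exp (t • A)
        = (exp (t • A))ᵀ * Aᵀ * N * exp (t • A) + (exp (t • A))ᵀ * N * (A * exp (t • A)) by
      noncomm_ring]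
    exact (hET.mul_const N).mul (hE t)
  simp only [← hφ]
  exact (LinearMap.toContinuousLinearMap φ).hasFDerivAt.comp_hasDerivAt t hG

theorem posSemidef_of_lyapunov {A Δ M W : Matrix ι ι ℝ} (hΔ : Δ.IsHermitian)
    (hM : M.PosSemidef) (hW : W.PosDef) (hΔeq : Aᵀ * Δ + Δ * A = -M)
    (hWeq : Aᵀ * W + W * A = -(W * W)) :
    Δ.PosSemidef := by
  classical
  refine PosSemidef.of_dotProduct_mulVec_nonneg hΔ fun x => ?_
  rw [star_trivial]
  by_contra! hx
  set z : ℝ → ι → ℝ := fun t => exp (t • A) *ᵥ x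
  have hz0 : z 0 = x := by simp [z]
  have hWW : ∀ u, u ⬝ᵥ ((W * W) *ᵥ u) = (W *ᵥ u) ⬝ᵥ (W *ᵥ u) := fun u => by
    rw [← mulVec_mulVec, dotProduct_mulVec, ← mulVec_transpose,
      (isHermitian_iff_isSymm.1 hW.isHermitian).eq]
  have hΔz : ∀ t, HasDerivAt (fun s => z s ⬝ᵥ (Δ *ᵥ z s)) (-(z t ⬝ᵥ (M *ᵥ z t))) t :=
    fun t => by
      simpa only [hΔeq, neg_mulVec, dotProduct_neg] using
        hasDerivAt_dotProduct_mulVec_exp_smul A Δ x t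
  have hWz : ∀ t, HasDerivAt (fun s => z s ⬝ᵥ (W *ᵥ z s)) (-((W *ᵥ z t) ⬝ᵥ (W *ᵥ z t))) t :=
    fun t => by
      simpa only [hWeq, neg_mulVec, dotProduct_neg, hWW] using
        hasDerivAt_dotProduct_mulVec_exp_smul A W x t
  have hΔz_anti : Antitone fun s => z s ⬝ᵥ (Δ *ᵥ z s) :=
    antitone_of_hasDerivAt_nonpos hΔz fun t => neg_nonpos.2 <| by
      simpa only [star_trivial] using hM.dotProduct_mulVec_nonneg (z t)
  obtain ⟨a, ha, hΔa⟩ := exists_neg_dotProduct_mulVec_le Δ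
  obtain ⟨b, hb, hWb⟩ := exists_dotProduct_self_le_of_isUnit hW.isUnit
  have hdecay : ∀ t, 0 ≤ t → a * b * -((W *ᵥ z t) ⬝ᵥ (W *ᵥ z t)) ≤ x ⬝ᵥ (Δ *ᵥ x) := by
    intro t ht
    have h1 := hΔz_anti ht
    simp only [hz0] at h1
    nlinarith [hΔa (z t), hWb (z t)]
  obtain ⟨t, ht⟩ := exists_neg_of_hasDerivAt_le_neg (neg_pos.2 hx)
    (fun t => (hWz t).const_mul (a * b)) (fun t ht => by linarith [hdecay t ht])
  have hWt : 0 ≤ z t ⬝ᵥ (W *ᵥ z t) := by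
    simpa only [star_trivial] using hW.posSemidef.dotProduct_mulVec_nonneg (z t)
  exact (mul_nonneg (mul_nonneg ha hb) hWt).not_gt ht

end LyapunovFlow

theorem cost_difference_identity_and_optimality_general {n m : ℕ}
    (A : Matrix (Fin n) (Fin n) ℝ) (B : Matrix (Fin n) (Fin m) ℝ)
    (Q : Matrix (Fin n) (Fin n) ℝ) (R : Matrix (Fin m) (Fin m) ℝ)
    (hR : R.PosDef)
    (Ps : Matrix (Fin n) (Fin n) ℝ) (hPs : Ps.PosDef)
    (hARE : Aᵀ * Ps + Ps * A + Q - Ps * B * R⁻¹ * Bᵀ * Ps = 0)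
    (Ks : Matrix (Fin m) (Fin n) ℝ) (hKs : Ks = R⁻¹ * Bᵀ * Ps)
    (K : Matrix (Fin m) (Fin n) ℝ)
    (PK : Matrix (Fin n) (Fin n) ℝ) (hPK : PK.PosDef)
    (hPKeq : (A - B * K)ᵀ * PK + PK * (A - B * K) + Q + Kᵀ * R * K = 0)
    (YK : Matrix (Fin n) (Fin n) ℝ) (hYK : YK.PosDef)
    (hYKeq : (A - B * K) * YK + YK * (A - B * K)ᵀ + 1 = 0) :
    (A - B * K)ᵀ * (PK - Ps) + (PK - Ps) * (A - B * K)
        + (K - Ks)ᵀ * R * (K - Ks) = 0 ∧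
      (PK - Ps).trace = ((K - Ks) * YK * (R * (K - Ks))ᵀ).trace ∧
      (PK - Ps).PosSemidef ∧
      Ps.trace ≤ PK.trace := by
  have hRsymm : Rᵀ = R := (isHermitian_iff_isSymm.1 hR.isHermitian).eq
  have hdiff : (A - B * K)ᵀ * (PK - Ps) + (PK - Ps) * (A - B * K)
      + (K - Ks)ᵀ * R * (K - Ks) = 0 :=
    hKs ▸ lyapunov_sub_riccati ((isUnit_iff_isUnit_det R).1 hR.isUnit) hRsymm
      (isHermitian_iff_isSymm.1 hPs.isHermitian).eq hARE hPKeq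
  have hgap : ((K - Ks)ᵀ * R * (K - Ks)).PosSemidef := by
    simpa only [conjTranspose_eq_transpose_of_trivial] using
      hR.posSemidef.conjTranspose_mul_mul_same (K - Ks)
  have hpsd : (PK - Ps).PosSemidef :=
    posSemidef_of_lyapunov (hPK.isHermitian.sub hPs.isHermitian) hgap hYK.inv
      (eq_neg_of_add_eq_zero_left hdiff)
      (lyapunov_inv ((isUnit_iff_isUnit_det YK).1 hYK.isUnit) hYKeq)
  refine ⟨hdiff, ?_, hpsd, ?_⟩
  · rw [trace_eq_of_lyapunov hdiff hYKeq, transpose_mul, hRsymm, Matrix.mul_assoc,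
      trace_mul_comm, Matrix.mul_assoc]
  · simpa only [trace_sub, sub_nonneg] using hpsd.trace_nonneg

/-- Subtracting the ARE from the Lyapunov equation for a stabilizing `K` and completing
the square gives `(A−BK)ᵀ(P_K−P*) + (P_K−P*)(A−BK) + (K−K*)ᵀR(K−K*) = 0`; consequently
`𝒥₂(K) − 𝒥₂(K*) = Tr(P_K − P*) = ⟨K−K*, R(K−K*)⟩_{Y_K} ≥ 0`, so `P_K ⪰ P*` and
`K*` is a global minimizer of `𝒥₂(K) = Tr(P_K)` over the stabilizing gains. -/
theorem cost_difference_identity_and_optimality {n m : ℕ}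
    (A : Matrix (Fin n) (Fin n) ℝ) (B : Matrix (Fin n) (Fin m) ℝ)
    (Q : Matrix (Fin n) (Fin n) ℝ) (R : Matrix (Fin m) (Fin m) ℝ)
    (hQ : Q.PosDef) (hR : R.PosDef)
    (Ps : Matrix (Fin n) (Fin n) ℝ) (hPs : Ps.PosDef)
    (hARE : Aᵀ * Ps + Ps * A + Q - Ps * B * R⁻¹ * Bᵀ * Ps = 0)
    (Ks : Matrix (Fin m) (Fin n) ℝ) (hKs : Ks = R⁻¹ * Bᵀ * Ps)
    (hKsHur : Hurwitz (A - B * Ks))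
    (K : Matrix (Fin m) (Fin n) ℝ) (hK : Hurwitz (A - B * K))
    (PK : Matrix (Fin n) (Fin n) ℝ) (hPK : PK.PosDef)
    (hPKeq : (A - B * K)ᵀ * PK + PK * (A - B * K) + Q + Kᵀ * R * K = 0)
    (YK : Matrix (Fin n) (Fin n) ℝ) (hYK : YK.PosDef)
    (hYKeq : (A - B * K) * YK + YK * (A - B * K)ᵀ + 1 = 0) :
    (A - B * K)ᵀ * (PK - Ps) + (PK - Ps) * (A - B * K)
        + (K - Ks)ᵀ * R * (K - Ks) = 0 ∧
      (PK - Ps).trace = ((K - Ks) * YK * (R * (K - Ks))ᵀ).trace ∧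
      (PK - Ps).PosSemidef ∧
      Ps.trace ≤ PK.trace :=
  cost_difference_identity_and_optimality_general A B Q R hR Ps hPs hARE Ks hKs K PK hPK hPKeq YK
    hYK hYKeq
end
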